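/- arXiv:2306.08340 — 8 statements merged into one kernel-verified Lean document; each statement's English description precedes it below -/
import Mathlib

section
/- For every constant C > 0 and every randomized algorithm for the classical secretary problem with predictions in the random-order model, there exists an instance (n, v, v̂) with v strictly positive such that the algorithm's expected hired value on that instance is less than max{1 − Cε, 0.348} · max_{i∈N} v(i), where ε = max_{i∈N} |1 − v̂(i)/v(i)|. -/
/-!
Take three candidates with predictions `(2, 1, 1)`. Conditioning on the first arrival, an
algorithm collects its value with the hiring probability `p` and otherwise at most the largest
remaining value. On the exact instance, 1-consistency therefore forces candidate 0 to be hired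
whenever it arrives first. On an instance `(2, x, y)` with one of `x, y` a thousand times the
other, 0.348-robustness then forces the probability of hiring the larger of the two on its first
arrival to exceed that of hiring the smaller one on its first arrival by `0.036`. Alternating
between candidates 1 and 2 along the values `1000 ^ k` pushes a probability above 1.
-/

/-- The expected value hired by the randomized algorithm `A` (which maps the sequence of
(identity, actual value) pairs revealed so far to the probability of hiring the last-revealed
candidate, decisions being drawn independently given the history and conditional on nobody
having been hired yet) on values `v` when the candidates are revealed in the order
`σ 0, σ 1, …`: the probability of hiring the candidate at position `k` is the product of the
hiring probability at step `k` and of the non-hiring probabilities at all earlier steps. -/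
noncomputable def randHiredValue (n : ℕ) (A : List (Fin n × ℝ) → ℝ)
    (v : Fin n → ℝ) (σ : Equiv.Perm (Fin n)) : ℝ :=
  ∑ k : Fin n,
    v (σ k) * A (((List.finRange n).take (k.1 + 1)).map fun j => (σ j, v (σ j))) *
      ∏ j ∈ Finset.univ.filter (fun j : Fin n => j < k),
        (1 - A (((List.finRange n).take (j.1 + 1)).map fun l => (σ l, v (σ l))))

open Finset

theorem sum_mul_prod_one_sub_le {ι R : Type*} [LinearOrder ι] [CommRing R] [LinearOrder R]
    [IsStrictOrderedRing R] (s : Finset ι) {a p : ι → R} {M : R}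
    (hp0 : ∀ i, 0 ≤ p i) (hp1 : ∀ i, p i ≤ 1) (ha : ∀ i, a i ≤ M) (hM : 0 ≤ M) :
    ∑ i ∈ s, a i * p i * ∏ j ∈ s with j < i, (1 - p j) ≤ M := by
  have hq : ∀ i, 0 ≤ 1 - p i := fun i => sub_nonneg.2 (hp1 i)
  calc ∑ i ∈ s, a i * p i * ∏ j ∈ s with j < i, (1 - p j)
      ≤ ∑ i ∈ s, M * p i * ∏ j ∈ s with j < i, (1 - p j) :=
        sum_le_sum fun i _ => mul_le_mul_of_nonneg_right
          (mul_le_mul_of_nonneg_right (ha i) (hp0 i)) (prod_nonneg fun j _ => hq j)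
    _ = M * (1 - ∏ i ∈ s, (1 - p i)) := by
        rw [prod_one_sub_ordered, sub_sub_cancel, mul_sum]
        exact sum_congr rfl fun i _ => mul_assoc _ _ _
    _ ≤ M := mul_le_of_le_one_right hM (sub_le_self _ (prod_nonneg fun i _ => hq i))

theorem sum_mul_prod_one_sub_fin_succ {R : Type*} [CommRing R] {n : ℕ} (a p : Fin (n + 1) → R) :
    ∑ k, a k * p k * ∏ j ∈ univ with j < k, (1 - p j) =
      a 0 * p 0 + (1 - p 0) *
        ∑ k : Fin n, a k.succ * p k.succ * ∏ j ∈ univ with j < k, (1 - p j.succ) := by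
  simp only [prod_filter, Fin.sum_univ_succ, Fin.prod_univ_succ, Fin.succ_lt_succ_iff,
    Fin.succ_pos, Fin.not_lt_zero, if_true, if_false, prod_const_one, mul_one, mul_sum]
  congr 1
  exact sum_congr rfl fun k _ => by ring

theorem Equiv.Perm.sum_comp_apply_zero {M : Type*} [AddCommMonoid M] {n : ℕ}
    (g : Fin (n + 1) → M) : ∑ σ : Equiv.Perm (Fin (n + 1)), g (σ 0) = n.factorial • ∑ i, g i := by
  rw [← Equiv.Perm.decomposeFin.symm.sum_comp, Fintype.sum_prod_type]
  simp [Equiv.Perm.decomposeFin_symm_apply_zero, Fintype.card_perm, smul_sum]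

section Hiring

variable {n : ℕ} {B : List (Fin (n + 1) × ℝ) → ℝ} {v : Fin (n + 1) → ℝ}

theorem randHiredValue_succ_le (hB0 : ∀ h, 0 ≤ B h) (hB1 : ∀ h, B h ≤ 1)
    (σ : Equiv.Perm (Fin (n + 1))) {M : ℝ} (hM : 0 ≤ M) (hv : ∀ i, i ≠ σ 0 → v i ≤ M) :
    randHiredValue (n + 1) B v σ ≤
      v (σ 0) * B [(σ 0, v (σ 0))] + (1 - B [(σ 0, v (σ 0))]) * M := by
  set hist : Fin (n + 1) → List (Fin (n + 1) × ℝ) := fun k =>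
    ((List.finRange (n + 1)).take (k.1 + 1)).map fun j => (σ j, v (σ j))
  have hist_zero : hist 0 = [(σ 0, v (σ 0))] := by simp [hist, List.finRange_succ]
  have hrest := sum_mul_prod_one_sub_le univ (a := fun k : Fin n => v (σ k.succ))
    (p := fun k => B (hist k.succ)) (fun _ => hB0 _) (fun _ => hB1 _)
    (fun k => hv _ (σ.injective.ne (Fin.succ_ne_zero k))) hM
  rw [randHiredValue, sum_mul_prod_one_sub_fin_succ (fun k => v (σ k)) (fun k => B (hist k)),
    hist_zero]
  exact add_le_add_right (mul_le_mul_of_nonneg_left hrest (sub_nonneg.2 (hB1 _))) _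

theorem sum_randHiredValue_le (hB0 : ∀ h, 0 ≤ B h) (hB1 : ∀ h, B h ≤ 1)
    {M : Fin (n + 1) → ℝ} (hM0 : ∀ i, 0 ≤ M i) (hM : ∀ i j, j ≠ i → v j ≤ M i) :
    ∑ σ, randHiredValue (n + 1) B v σ ≤
      n.factorial * ∑ i, (v i * B [(i, v i)] + (1 - B [(i, v i)]) * M i) := by
  rw [← nsmul_eq_mul, ← Equiv.Perm.sum_comp_apply_zero
    (fun i => v i * B [(i, v i)] + (1 - B [(i, v i)]) * M i)]
  exact sum_le_sum fun σ _ => randHiredValue_succ_le hB0 hB1 σ (hM0 _) (hM _)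

end Hiring

theorem add_le_of_robust_bound {x y u w : ℝ} (hx : 1 ≤ x) (hxy : 1000 * x ≤ y)
    (hu0 : 0 ≤ u) (hu1 : u ≤ 1) (hw0 : 0 ≤ w)
    (h : 1.044 * y ≤ 2 + (x * u + (1 - u) * (2 + y)) + (y * w + (1 - w) * (2 + x))) :
    u + 0.036 ≤ w := by
  have hy : 0 < y := by linarith
  have hcoarse : 0.036 * y ≤ y * (w - u) := by nlinarith
  nlinarith

theorem add_two_mul_le_of_alternating {f g : ℝ → ℝ} {r δ : ℝ} (hr : 1 ≤ r)
    (hfg : ∀ x, 1 ≤ x → f x + δ ≤ g (r * x)) (hgf : ∀ x, 1 ≤ x → g x + δ ≤ f (r * x))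
    (k : ℕ) : f 1 + 2 * k * δ ≤ f (r ^ (2 * k)) := by
  induction k with
  | zero => simp
  | succ k ih =>
    have hk : 1 ≤ r ^ (2 * k) := one_le_pow₀ hr
    have h1 := hfg _ hk
    have h2 := hgf _ (one_le_mul_of_one_le_of_one_le hr hk)
    rw [show r ^ (2 * (k + 1)) = r * (r * r ^ (2 * k)) by ring]
    push_cast
    linarith

section ThreeCandidates

variable {B : List (Fin 3 × ℝ) → ℝ}

theorem sum_randHiredValue_two_one_one_le (hB0 : ∀ h, 0 ≤ B h) (hB1 : ∀ h, B h ≤ 1) :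
    ∑ σ, randHiredValue 3 B ![2, 1, 1] σ ≤ 10 + 2 * B [(0, 2)] := by
  have hM : ∀ i j : Fin 3, j ≠ i → (![2, 1, 1] : Fin 3 → ℝ) j ≤ ![1, 2, 2] i := by
    intro i j hij
    fin_cases i <;> fin_cases j <;> simp at hij ⊢
  refine (sum_randHiredValue_le hB0 hB1 (fun i => by fin_cases i <;> norm_num) hM).trans ?_
  rw [Fin.sum_univ_three]
  simp only [Matrix.cons_val_zero, Matrix.cons_val_one, Matrix.cons_val_two, Matrix.tail_cons,
    Matrix.head_cons, Nat.factorial_two, Nat.cast_ofNat]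
  linarith [hB0 [(1, 1)], hB0 [(2, 1)]]

theorem sum_randHiredValue_two_le_of_hires_top (hB0 : ∀ h, 0 ≤ B h) (hB1 : ∀ h, B h ≤ 1)
    (htop : B [(0, 2)] = 1) {x y : ℝ} (hx : 0 ≤ x) (hy : 0 ≤ y) :
    ∑ σ, randHiredValue 3 B ![2, x, y] σ ≤
      2 * (2 + (x * B [(1, x)] + (1 - B [(1, x)]) * (2 + y)) +
        (y * B [(2, y)] + (1 - B [(2, y)]) * (2 + x))) := by
  have hM : ∀ i j : Fin 3, j ≠ i → (![2, x, y] : Fin 3 → ℝ) j ≤ ![x + y, 2 + y, 2 + x] i := by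
    intro i j hij
    fin_cases i <;> fin_cases j <;> simp at hij ⊢ <;> linarith
  refine (sum_randHiredValue_le hB0 hB1
    (fun i => by fin_cases i <;> simp <;> linarith) hM).trans (le_of_eq ?_)
  rw [Fin.sum_univ_three]
  simp [htop]

/- The sums are `3!` times expected values: `hcons` is 1-consistency on the exact instance and
`hrob` is 0.348-robustness on the instances `(2, x, y)`. -/
theorem false_of_consistent_of_robust (hB0 : ∀ h, 0 ≤ B h) (hB1 : ∀ h, B h ≤ 1)
    (hcons : 12 ≤ ∑ σ, randHiredValue 3 B ![2, 1, 1] σ)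
    (hrob : ∀ x y, 0 < x → 0 < y → 2.088 * max x y ≤ ∑ σ, randHiredValue 3 B ![2, x, y] σ) :
    False := by
  have htop : B [(0, 2)] = 1 :=
    le_antisymm (hB1 _) (by linarith [sum_randHiredValue_two_one_one_le hB0 hB1])
  have hbound : ∀ x y, 0 < x → 0 < y → 1.044 * max x y ≤
      2 + (x * B [(1, x)] + (1 - B [(1, x)]) * (2 + y)) +
        (y * B [(2, y)] + (1 - B [(2, y)]) * (2 + x)) := fun x y hx hy => by
    linarith [hrob x y hx hy, sum_randHiredValue_two_le_of_hires_top hB0 hB1 htop hx.le hy.le]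
  have hgrowth := add_two_mul_le_of_alternating (f := fun x => B [(1, x)])
    (g := fun y => B [(2, y)]) (r := 1000) (δ := 0.036) (by norm_num)
    (fun x hx => add_le_of_robust_bound hx le_rfl (hB0 _) (hB1 _) (hB0 _) <| by
      linarith [hbound x (1000 * x) (by linarith) (by linarith), le_max_right x (1000 * x)])
    (fun y hy => add_le_of_robust_bound hy le_rfl (hB0 _) (hB1 _) (hB0 _) <| by
      linarith [hbound (1000 * y) y (by linarith) (by linarith), le_max_left (1000 * y) y]) 14
  have hle := hB1 [(1, 1000 ^ (2 * 14))]
  norm_num at hgrowth hle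
  linarith [hB0 [(1, 1)]]

end ThreeCandidates

theorem randomized_hardness_general (C : ℝ)
    (A : (n : ℕ) → (Fin n → ℝ) → List (Fin n × ℝ) → ℝ)
    (hA : ∀ n vhat h, A n vhat h ∈ Set.Icc (0 : ℝ) 1) :
    ∃ (n : ℕ) (v vhat : Fin n → ℝ), 0 < n ∧ (∀ i, 0 < v i) ∧ (∀ i, 0 ≤ vhat i) ∧
      (∑ σ : Equiv.Perm (Fin n), randHiredValue n (A n vhat) v σ) / (n.factorial : ℝ) <
        max (1 - C * ⨆ i, |1 - vhat i / v i|) 0.348 * ⨆ i, v i := by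
  by_contra! hgood
  set vhat : Fin 3 → ℝ := ![2, 1, 1]
  have hratio : ∀ v : Fin 3 → ℝ, (∀ i, 0 < v i) →
      6 * (max (1 - C * ⨆ i, |1 - vhat i / v i|) 0.348 * ⨆ i, v i) ≤
        ∑ σ, randHiredValue 3 (A 3 vhat) v σ := fun v hv => by
    have h := hgood 3 v vhat (by norm_num) hv (fun i => by fin_cases i <;> norm_num [vhat])
    rwa [show ((3 : ℕ).factorial : ℝ) = 6 by norm_num [Nat.factorial], le_div_iff₀ (by norm_num),
      mul_comm] at h
  refine false_of_consistent_of_robust (fun h => (hA 3 vhat h).1) (fun h => (hA 3 vhat h).2)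
    ?_ fun x y hx hy => ?_
  · have hvhat : ∀ i, 0 < vhat i := fun i => by fin_cases i <;> norm_num [vhat]
    have hε : ⨆ i, |1 - vhat i / vhat i| = 0 := by
      simp only [fun i => div_self (hvhat i).ne', sub_self, abs_zero, ciSup_const]
    have hsup : 2 ≤ ⨆ i, vhat i := le_ciSup (Finite.bddAbove_range vhat) 0
    have h := hratio vhat hvhat
    rw [hε, mul_zero, sub_zero, max_eq_left (by norm_num), one_mul] at h
    linarith
  · have h := hratio ![2, x, y] (fun i => by fin_cases i <;> simp [hx, hy])
    have hbdd := Finite.bddAbove_range (![2, x, y] : Fin 3 → ℝ)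
    have hsup : max x y ≤ ⨆ i, (![2, x, y] : Fin 3 → ℝ) i :=
      max_le (le_ciSup hbdd 1) (le_ciSup hbdd 2)
    have hfactor := le_max_right (1 - C * ⨆ i, |1 - vhat i / (![2, x, y] : Fin 3 → ℝ) i|) 0.348
    nlinarith [le_max_left x y]

/-- for every `C > 0` and every randomized algorithm for the classical secretary
problem with predictions in the random-order model, there is an instance `(n, v, v̂)` with `v`
strictly positive on which the algorithm's expected hired value is below
`max {1 - Cε, 0.348} · max_i v(i)`, where `ε = max_i |1 - v̂(i)/v(i)|`. -/
theorem randomized_hardness (C : ℝ) (hC : 0 < C)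
    (A : (n : ℕ) → (Fin n → ℝ) → List (Fin n × ℝ) → ℝ)
    (hA : ∀ n vhat h, A n vhat h ∈ Set.Icc (0 : ℝ) 1) :
    ∃ (n : ℕ) (v vhat : Fin n → ℝ), 0 < n ∧ (∀ i, 0 < v i) ∧ (∀ i, 0 ≤ vhat i) ∧
      (∑ σ : Equiv.Perm (Fin n), randHiredValue n (A n vhat) v σ) / (n.factorial : ℝ) <
        max (1 - C * ⨆ i, |1 - vhat i / v i|) 0.348 * ⨆ i, v i :=
  randomized_hardness_general C A hA
end

section
/- Fix a capacity k ≥ 2 and a parameter θ ≥ 0, and let M = {i ∈ N : |1 − v̂(i)/v(i)| > θ}. Suppose 1 ≤ |M| ≤ √k · ln k. In a run of the learned Kleinberg algorithm with parameter θ, let S = Ŝ ∩ Y be the set of candidates hired strictly before the arrival of the first candidate of M (Y being the set of candidates arriving before that time) and let k' = k − |S| − 1. Then Pr(k' ≥ √k · ln k) ≥ 1 − 3 ln k/√k, the probability being over the i.i.d. uniform arrival times. -/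
/-!
Put `c = 1 - 2 ln k / √k`; when `3 ln k ≥ √k` the bound is trivial. Two bad events are avoided
with probability at least `1 - 3 ln k / √k`: a fixed candidate `i₀ ∈ M` arriving after time `c`
(probability `1 - c = 2 ln k / √k`), and at least `|Ŝ| c + √k ln k - 1` candidates of `Ŝ`
arriving before `c`. The latter count is binomial with mean `|Ŝ| c` and variance
`|Ŝ| c (1 - c) ≤ k (1 - c) = 2 √k ln k`, so Chebyshev bounds it by `ln k / √k`. Outside both
events the first candidate of `M` arrives before `c`, so fewer than
`k c + √k ln k - 1 = k - √k ln k - 1` candidates of `Ŝ` precede it.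
-/

open MeasureTheory ProbabilityTheory Finset Real

/-- The distribution of the i.i.d. uniform-on-`[0,1]` arrival times of the `n` candidates. -/
noncomputable def uniformArrivals (n : ℕ) : Measure (Fin n → ℝ) :=
  Measure.pi fun _ => volume.restrict (Set.Icc (0 : ℝ) 1)

lemma variance_indicator_one {Ω : Type*} [MeasurableSpace Ω] {μ : Measure Ω}
    [IsProbabilityMeasure μ] {B : Set Ω} (hB : MeasurableSet B) :
    Var[B.indicator 1; μ] = μ.real B * (1 - μ.real B) := by
  have hsq : B.indicator (1 : Ω → ℝ) ^ 2 = B.indicator 1 := by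
    ext ω
    by_cases h : ω ∈ B <;> simp [h]
  have hmem : MemLp (B.indicator (1 : Ω → ℝ)) 2 μ :=
    memLp_indicator_const 2 hB 1 (Or.inr (measure_ne_top μ B))
  rw [variance_eq_sub hmem, hsq, integral_indicator_one hB]
  ring

lemma ofReal_one_sub_add_le_measure_compl_union {Ω : Type*} [MeasurableSpace Ω] {μ : Measure Ω}
    [IsProbabilityMeasure μ] {A B : Set Ω} {a b : ℝ} (ha : 0 ≤ a) (hb : 0 ≤ b)
    (hA : μ A ≤ ENNReal.ofReal a) (hB : μ B ≤ ENNReal.ofReal b) :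
    ENNReal.ofReal (1 - (a + b)) ≤ μ (A ∪ B)ᶜ := by
  have hAB : μ (A ∪ B) ≤ ENNReal.ofReal (a + b) := by
    rw [ENNReal.ofReal_add ha hb]
    exact (measure_union_le A B).trans (add_le_add hA hB)
  calc ENNReal.ofReal (1 - (a + b)) = 1 - ENNReal.ofReal (a + b) := by
        rw [ENNReal.ofReal_sub _ (add_nonneg ha hb), ENNReal.ofReal_one]
    _ ≤ 1 - μ (A ∪ B) := tsub_le_tsub_left hAB 1
    _ ≤ μ (A ∪ B)ᶜ := by
        rw [tsub_le_iff_left, ← measure_univ (μ := μ)]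
        exact measure_univ_le_add_compl _

lemma card_filter_mem_eq_sum_indicator {ι α : Type*} {A : Set α} [DecidablePred (· ∈ A)]
    (s : Finset ι) :
    (fun t : ι → α => (#{l ∈ s | t l ∈ A} : ℝ)) = ∑ l ∈ s, (Function.eval l ⁻¹' A).indicator 1 := by
  ext t
  rw [Finset.sum_apply, Finset.natCast_card_filter]
  refine Finset.sum_congr rfl fun l _ => ?_
  by_cases h : t l ∈ A <;> simp [h]

section BinomialCount

variable {ι α : Type*} [Fintype ι] [MeasurableSpace α] {ν : Measure α} [IsProbabilityMeasure ν]
  {A : Set α}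

lemma measureReal_pi_eval_preimage (hA : MeasurableSet A) (l : ι) :
    (Measure.pi fun _ : ι => ν).real (Function.eval l ⁻¹' A) = ν.real A := by
  rw [measureReal_def, measureReal_def,
    (measurePreserving_eval (fun _ : ι => ν) l).measure_preimage hA.nullMeasurableSet]

lemma memLp_indicator_eval_preimage (hA : MeasurableSet A) (l : ι) :
    MemLp ((Function.eval l ⁻¹' A).indicator (1 : (ι → α) → ℝ)) 2 (Measure.pi fun _ : ι => ν) :=
  memLp_indicator_const 2 (hA.preimage (measurable_pi_apply l)) 1 (Or.inr (measure_ne_top _ _))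

lemma integral_indicator_eval_preimage (hA : MeasurableSet A) (l : ι) :
    ∫ t, (Function.eval l ⁻¹' A).indicator 1 t ∂(Measure.pi fun _ : ι => ν) = ν.real A := by
  rw [integral_indicator_one (hA.preimage (measurable_pi_apply l)), measureReal_pi_eval_preimage hA]

lemma variance_indicator_eval_preimage (hA : MeasurableSet A) (l : ι) :
    Var[(Function.eval l ⁻¹' A).indicator 1; Measure.pi fun _ : ι => ν] =
      ν.real A * (1 - ν.real A) := by
  rw [variance_indicator_one (hA.preimage (measurable_pi_apply l)), measureReal_pi_eval_preimage hA]

lemma integral_card_filter_mem [DecidablePred (· ∈ A)] (hA : MeasurableSet A) (s : Finset ι) :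
    ∫ t, (#{l ∈ s | t l ∈ A} : ℝ) ∂(Measure.pi fun _ : ι => ν) = #s * ν.real A := by
  rw [card_filter_mem_eq_sum_indicator, Finset.sum_fn,
    integral_finsetSum _ fun l _ => (memLp_indicator_eval_preimage hA l).integrable one_le_two]
  simp [integral_indicator_eval_preimage hA]

lemma variance_card_filter_mem [DecidablePred (· ∈ A)] (hA : MeasurableSet A) (s : Finset ι) :
    Var[fun t => (#{l ∈ s | t l ∈ A} : ℝ); Measure.pi fun _ : ι => ν] =
      #s * (ν.real A * (1 - ν.real A)) := by
  have hindep : Set.Pairwise ↑s fun l m =>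
      (Function.eval l ⁻¹' A).indicator (1 : (ι → α) → ℝ) ⟂ᵢ[Measure.pi fun _ : ι => ν]
        (Function.eval m ⁻¹' A).indicator 1 := fun l _ m _ hlm =>
    (iIndepFun_pi (μ := fun _ : ι => ν) (X := fun _ => A.indicator (1 : α → ℝ))
      fun _ => (measurable_one.indicator hA).aemeasurable).indepFun hlm
  rw [card_filter_mem_eq_sum_indicator,
    IndepFun.variance_sum (fun l _ => memLp_indicator_eval_preimage hA l) hindep]
  simp [variance_indicator_eval_preimage hA]

lemma measure_card_filter_mem_ge_le [DecidablePred (· ∈ A)] (hA : MeasurableSet A)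
    (s : Finset ι) {a : ℝ} (ha : 0 < a) :
    (Measure.pi fun _ : ι => ν) {t | #s * ν.real A + a ≤ #{l ∈ s | t l ∈ A}} ≤
      ENNReal.ofReal (#s * (ν.real A * (1 - ν.real A)) / a ^ 2) := by
  have hmem : MemLp (fun t => (#{l ∈ s | t l ∈ A} : ℝ)) 2 (Measure.pi fun _ : ι => ν) := by
    rw [card_filter_mem_eq_sum_indicator]
    exact memLp_finsetSum' _ fun l _ => memLp_indicator_eval_preimage hA l
  rw [← variance_card_filter_mem hA s]
  refine (measure_mono fun t ht => ?_).trans (meas_ge_le_variance_div_sq hmem ha)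
  simp only [Set.mem_ofPred_eq, integral_card_filter_mem hA s] at ht ⊢
  exact (le_sub_iff_add_le'.2 ht).trans (le_abs_self _)

end BinomialCount

lemma five_halves_lt_log_of_three_mul_log_lt_sqrt {x : ℝ} (hx : 2 ≤ x) (h : 3 * log x < √x) :
    5 / 2 < log x := by
  have hlog2 := log_two_gt_d9
  have hlog (m : ℕ) (hm : (2 : ℝ) ^ m ≤ x) : m * log 2 ≤ log x := by
    rw [← log_pow]
    exact log_le_log (by positivity) hm
  have hsq (m : ℕ) (hm : (2 : ℝ) ^ m ≤ x) : (3 * (m * log 2)) ^ 2 < x :=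
    (lt_sqrt (by positivity)).1 (by linarith [hlog m hm])
  have h4 : (2 : ℝ) ^ 2 ≤ x := by
    have := hsq 1 (by simpa using hx)
    push_cast at this
    nlinarith
  have h16 : (2 : ℝ) ^ 4 ≤ x := by
    have := hsq 2 h4
    push_cast at this
    nlinarith
  have := hlog 4 h16
  push_cast at this
  linarith

lemma two_mul_sqrt_le_sqrt_mul_log_sub_one {x : ℝ} (hx : 2 ≤ x) (h : 3 * log x < √x) :
    2 * √x ≤ √x * log x - 1 := by
  have hL := five_halves_lt_log_of_three_mul_log_lt_sqrt hx h
  nlinarith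

lemma exists_min_image_card_filter_lt_le {ι β : Type*} [LinearOrder β] (M s : Finset ι)
    (t : ι → β) {i₀ : ι} (hi₀ : i₀ ∈ M) {c : β} (hc : t i₀ < c) :
    ∃ i ∈ M, (∀ j ∈ M, t i ≤ t j) ∧ #{l ∈ s | t l < t i} ≤ #{l ∈ s | t l < c} := by
  obtain ⟨i, hiM, hmin⟩ := M.exists_min_image t ⟨i₀, hi₀⟩
  refine ⟨i, hiM, hmin, card_le_card fun l hl => ?_⟩
  simp only [mem_filter] at hl ⊢
  exact ⟨hl.1, hl.2.trans_le ((hmin i₀ hi₀).trans hc.le)⟩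

instance : IsProbabilityMeasure (volume.restrict (Set.Icc (0 : ℝ) 1)) := ⟨by simp⟩

instance (n : ℕ) : IsProbabilityMeasure (uniformArrivals n) := by
  unfold uniformArrivals
  infer_instance

lemma measureReal_restrict_unitInterval_Iio {c : ℝ} (hc₀ : 0 ≤ c) (hc₁ : c ≤ 1) :
    (volume.restrict (Set.Icc (0 : ℝ) 1)).real (Set.Iio c) = c := by
  have hIco : Set.Iio c ∩ Set.Icc 0 1 = Set.Ico 0 c := by
    ext y
    simp only [Set.mem_inter_iff, Set.mem_Iio, Set.mem_Icc, Set.mem_Ico]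
    grind
  rw [measureReal_restrict_apply measurableSet_Iio, hIco, Real.volume_real_Ico_of_le hc₀, sub_zero]

lemma uniformArrivals_setOf_le_apply_le (n : ℕ) (i : Fin n) (a : ℝ) :
    uniformArrivals n {t | a ≤ t i} ≤ ENNReal.ofReal (1 - a) := by
  have hpre : {t : Fin n → ℝ | a ≤ t i} = Function.eval i ⁻¹' Set.Ici a := rfl
  rw [uniformArrivals, hpre, (measurePreserving_eval _ i).measure_preimage
    measurableSet_Ici.nullMeasurableSet, Measure.restrict_apply measurableSet_Ici,
    ← Real.volume_Icc]
  exact measure_mono fun y hy => ⟨hy.1, hy.2.2⟩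

lemma uniformArrivals_setOf_card_filter_lt_ge_le (n : ℕ) (s : Finset (Fin n)) {c a : ℝ}
    (hc₀ : 0 ≤ c) (hc₁ : c ≤ 1) (ha : 0 < a) :
    uniformArrivals n {t | #s * c + a ≤ #{l ∈ s | t l < c}} ≤
      ENNReal.ofReal (#s * (c * (1 - c)) / a ^ 2) := by
  have := measure_card_filter_mem_ge_le (ν := volume.restrict (Set.Icc (0 : ℝ) 1))
    (measurableSet_Iio (a := c)) s ha
  rw [measureReal_restrict_unitInterval_Iio hc₀ hc₁] at this
  simpa only [uniformArrivals, Set.mem_Iio] using this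

lemma mul_mul_one_sub_div_sq_le_log_div_sqrt {K m c : ℝ} (hK : 2 ≤ K) (h : 3 * log K < √K) (hm : m ≤ K)
    (hc₀ : 0 ≤ c) (hc₁ : c ≤ 1) (hc : K * (1 - c) = 2 * (√K * log K)) :
    m * (c * (1 - c)) / (√K * log K - 1) ^ 2 ≤ log K / √K := by
  have hR : 0 < √K := sqrt_pos.2 (by linarith)
  have hgap := two_mul_sqrt_le_sqrt_mul_log_sub_one hK h
  have hvar : m * (c * (1 - c)) ≤ 2 * (√K * log K) := by
    rw [← hc]
    nlinarith [mul_nonneg hc₀ (sub_nonneg.2 hc₁)]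
  have hK' : √K ^ 2 = K := sq_sqrt (by linarith)
  have hsq : 4 * K ≤ (√K * log K - 1) ^ 2 := by nlinarith
  have hL : 0 < log K := log_pos (by linarith)
  rw [div_le_div_iff₀ (by nlinarith) hR]
  nlinarith [mul_le_mul_of_nonneg_right hvar hR.le, mul_le_mul_of_nonneg_left hsq hL.le]

theorem learned_kleinberg_kprime_large_general (n k : ℕ) (hk : 2 ≤ k) (θ : ℝ)
    (v vhat : Fin n → ℝ)
    (Shat : Finset (Fin n)) (hScard : Shat.card ≤ k)
    (hM1 : 1 ≤ (Finset.univ.filter fun i : Fin n => θ < |1 - vhat i / v i|).card) :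
    ENNReal.ofReal (1 - 3 * Real.log k / Real.sqrt k) ≤
      uniformArrivals n
        {t | ∃ i ∈ Finset.univ.filter fun i' : Fin n => θ < |1 - vhat i' / v i'|,
          (∀ j ∈ Finset.univ.filter fun i' : Fin n => θ < |1 - vhat i' / v i'|, t i ≤ t j) ∧
            Real.sqrt k * Real.log k ≤
              (k : ℝ) - ((Shat.filter fun l => t l < t i).card : ℝ) - 1} := by
  classical
  obtain ⟨i₀, hi₀⟩ := card_pos.1 hM1
  rcases le_or_gt (1 - 3 * log k / √k) 0 with hneg | hpos
  · rw [ENNReal.ofReal_eq_zero.2 hneg]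
    exact zero_le
  have hk₂ : (2 : ℝ) ≤ k := by exact_mod_cast hk
  have hR : 0 < √(k : ℝ) := sqrt_pos.2 (by linarith)
  have hL : 0 < log (k : ℝ) := log_pos (by linarith)
  have h3L : 3 * log k < √k := by rwa [sub_pos, div_lt_one hR] at hpos
  set c := 1 - 2 * log k / √k with hc
  have hc₀ : 0 ≤ c := by rw [hc, sub_nonneg, div_le_one hR]; linarith
  have hc₁ : c ≤ 1 := by rw [hc, sub_le_self_iff]; positivity
  have hkc : (k : ℝ) * (1 - c) = 2 * (√k * log k) := by
    rw [hc, sub_sub_cancel, mul_div_assoc', div_eq_iff hR.ne']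
    linear_combination (-2 * log k) * sq_sqrt (Nat.cast_nonneg k)
  have hS : (#Shat : ℝ) ≤ k := by exact_mod_cast hScard
  have hcrowd := (uniformArrivals_setOf_card_filter_lt_ge_le n Shat hc₀ hc₁
    (by linarith [two_mul_sqrt_le_sqrt_mul_log_sub_one hk₂ h3L])).trans
    (ENNReal.ofReal_le_ofReal (mul_mul_one_sub_div_sq_le_log_div_sqrt hk₂ h3L hS hc₀ hc₁ hkc))
  refine le_trans ?_ ((ofReal_one_sub_add_le_measure_compl_union (by linarith) (by positivity)
    (uniformArrivals_setOf_le_apply_le n i₀ c) hcrowd).trans (measure_mono ?_))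
  · refine ENNReal.ofReal_le_ofReal (le_of_eq ?_)
    rw [hc]
    ring
  · intro t ht
    simp only [Set.compl_union, Set.mem_inter_iff, Set.mem_compl_iff, Set.mem_ofPred_eq,
      not_le] at ht
    obtain ⟨i, hiM, hmin, hcard⟩ := exists_min_image_card_filter_lt_le _ Shat t hi₀ ht.1
    refine ⟨i, hiM, hmin, ?_⟩
    have : (#{l ∈ Shat | t l < t i} : ℝ) ≤ #{l ∈ Shat | t l < c} := by exact_mod_cast hcard
    linarith [mul_le_mul_of_nonneg_right hS hc₀]

/-- for capacity `k ≥ 2`, threshold `θ ≥ 0`, and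
`M = {i : |1 - v̂(i)/v(i)| > θ}` with `1 ≤ |M| ≤ √k · ln k`, in a run of learned Kleinberg the
remaining capacity `k' = k - |S| - 1` at the switch (where `S = Ŝ ∩ Y` is the set of
candidates of `Ŝ` arriving strictly before the first arrival `i` of a candidate of `M`)
satisfies `k' ≥ √k · ln k` with probability at least `1 - 3 ln k/√k` over the i.i.d. uniform
arrival times. -/
theorem learned_kleinberg_kprime_large (n k : ℕ) (hk : 2 ≤ k) (θ : ℝ) (hθ : 0 ≤ θ)
    (v vhat : Fin n → ℝ) (hv : ∀ i, 0 < v i) (hvhat : ∀ i, 0 ≤ vhat i)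
    (Shat : Finset (Fin n)) (hScard : Shat.card ≤ k)
    (hSmax : ∀ S : Finset (Fin n), S.card ≤ k → ∑ i ∈ S, vhat i ≤ ∑ i ∈ Shat, vhat i)
    (hM1 : 1 ≤ (Finset.univ.filter fun i : Fin n => θ < |1 - vhat i / v i|).card)
    (hM2 : ((Finset.univ.filter fun i : Fin n => θ < |1 - vhat i / v i|).card : ℝ) ≤
      Real.sqrt k * Real.log k) :
    ENNReal.ofReal (1 - 3 * Real.log k / Real.sqrt k) ≤
      uniformArrivals n
        {t | ∃ i ∈ Finset.univ.filter fun i' : Fin n => θ < |1 - vhat i' / v i'|,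
          (∀ j ∈ Finset.univ.filter fun i' : Fin n => θ < |1 - vhat i' / v i'|, t i ≤ t j) ∧
            Real.sqrt k * Real.log k ≤
              (k : ℝ) - ((Shat.filter fun l => t l < t i).card : ℝ) - 1} :=
  learned_kleinberg_kprime_large_general n k hk θ v vhat Shat hScard hM1
end

section
/- Let N be a finite set, k a positive integer, and v̂ : N → ℝ_{≥0}. Let Ŝ ⊆ N with |Ŝ| = k consist of k largest predicted values, i.e., v̂(i) ≥ v̂(j) for every i ∈ Ŝ and j ∈ N∖Ŝ. Then for every M ⊆ N and every S* ⊆ N with |S*| ≤ k and S*∖M ≠ ∅, it holds that Σ_{i∈Ŝ∖M} v̂(i) ≥ min{1, |Ŝ∖M| / |S*∖M|} · Σ_{i∈S*∖M} v̂(i). -/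
/-!
Let `A = Ŝ \ M` and `B = S* \ M`. Every element of `B \ A` lies outside `Ŝ`, so its value is at
most `m = min_{A} v̂`. Exchanging `B \ A` for `A \ B` therefore gives
`v̂(B) ≤ v̂(A) + (|B| - |A|) m`. If `|B| ≤ |A|` this yields `v̂(B) ≤ v̂(A)` because `m ≥ 0`; otherwise
`m ≤ v̂(A) / |A|` turns it into `|A| v̂(B) ≤ |B| v̂(A)`.
-/

open Finset

namespace Finset

variable {ι R : Type*} [DecidableEq ι] [Field R] [LinearOrder R] [IsStrictOrderedRing R]
  (f : ι → R) {A B : Finset ι} {m : R}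

theorem sum_le_sum_add_card_sub_mul (hA : ∀ i ∈ A, m ≤ f i) (hB : ∀ j ∈ B \ A, f j ≤ m) :
    ∑ j ∈ B, f j ≤ ∑ i ∈ A, f i + ((#B : R) - #A) * m := by
  have hBA : ∑ j ∈ B \ A, f j ≤ #(B \ A) * m := by
    simpa [nsmul_eq_mul] using sum_le_card_nsmul _ f m hB
  have hAB : #(A \ B) * m ≤ ∑ i ∈ A \ B, f i := by
    simpa [nsmul_eq_mul] using card_nsmul_le_sum _ f m fun i hi ↦ hA i (mem_sdiff.1 hi).1
  have hcardB : (#(B ∩ A) : R) + #(B \ A) = #B := by exact_mod_cast card_inter_add_card_sdiff B A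
  have hcardA : (#(B ∩ A) : R) + #(A \ B) = #A := by
    rw [inter_comm]; exact_mod_cast card_inter_add_card_sdiff A B
  rw [← sum_inter_add_sum_sdiff B A, ← sum_inter_add_sum_sdiff A B, inter_comm A B,
    ← hcardA, ← hcardB]
  linear_combination hBA + hAB

theorem sum_le_sum_of_card_le (hA : ∀ i ∈ A, m ≤ f i) (hB : ∀ j ∈ B \ A, f j ≤ m) (hm : 0 ≤ m)
    (hcard : #B ≤ #A) : ∑ j ∈ B, f j ≤ ∑ i ∈ A, f i := by
  have hcard' : (#B : R) ≤ #A := by exact_mod_cast hcard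
  nlinarith [sum_le_sum_add_card_sub_mul f hA hB]

theorem card_mul_sum_le_card_mul_sum (hA : ∀ i ∈ A, m ≤ f i) (hB : ∀ j ∈ B \ A, f j ≤ m)
    (hcard : #A ≤ #B) : #A * ∑ j ∈ B, f j ≤ #B * ∑ i ∈ A, f i := by
  have hcard' : (#A : R) ≤ #B := by exact_mod_cast hcard
  have hmA : #A * m ≤ ∑ i ∈ A, f i := by
    simpa [nsmul_eq_mul] using card_nsmul_le_sum _ f m hA
  nlinarith [sum_le_sum_add_card_sub_mul f hA hB]

theorem min_one_div_card_mul_sum_le (hfA : ∀ i ∈ A, 0 ≤ f i) (hfB : ∀ j ∈ B, 0 ≤ f j)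
    (hdom : ∀ i ∈ A, ∀ j ∈ B \ A, f j ≤ f i) :
    min 1 ((#A : R) / #B) * ∑ j ∈ B, f j ≤ ∑ i ∈ A, f i := by
  obtain rfl | hAne := A.eq_empty_or_nonempty
  · simp
  obtain ⟨i₀, hi₀, hmin⟩ := A.exists_min_image f hAne
  have hB : ∀ j ∈ B \ A, f j ≤ f i₀ := fun j hj ↦ hdom i₀ hi₀ j hj
  rw [min_mul_of_nonneg _ _ (sum_nonneg hfB), min_le_iff]
  rcases le_or_gt #B #A with hcard | hcard
  · exact .inl (by simpa using sum_le_sum_of_card_le f hmin hB (hfA i₀ hi₀) hcard)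
  · have hBpos : (0 : R) < #B := by exact_mod_cast (Nat.zero_le _).trans_lt hcard
    refine .inr ?_
    rw [div_mul_eq_mul_div, div_le_iff₀ hBpos, mul_comm _ (#B : R)]
    exact card_mul_sum_le_card_mul_sum f hmin hB hcard.le

end Finset

theorem top_k_pred_sum_lower_general {α : Type*} [DecidableEq α] (N : Finset α)
    (vhat : α → ℝ) (hvhat : ∀ i ∈ N, 0 ≤ vhat i)
    (Shat : Finset α) (hSsub : Shat ⊆ N)
    (htop : ∀ i ∈ Shat, ∀ j ∈ N \ Shat, vhat j ≤ vhat i)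
    (M : Finset α)
    (Sstar : Finset α) (hstarsub : Sstar ⊆ N) :
    min 1 (((Shat \ M).card : ℝ) / ((Sstar \ M).card : ℝ)) * ∑ i ∈ Sstar \ M, vhat i ≤
      ∑ i ∈ Shat \ M, vhat i := by
  refine min_one_div_card_mul_sum_le vhat (fun i hi ↦ hvhat i (hSsub (mem_sdiff.1 hi).1))
    (fun j hj ↦ hvhat j (hstarsub (mem_sdiff.1 hj).1)) fun i hi j hj ↦ ?_
  obtain ⟨⟨hjS, hjM⟩, hjA⟩ : (j ∈ Sstar ∧ j ∉ M) ∧ j ∉ Shat \ M := by simpa using hj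
  have hjShat : j ∉ Shat := fun h ↦ hjA (mem_sdiff.2 ⟨h, hjM⟩)
  exact htop i (mem_sdiff.1 hi).1 j (mem_sdiff.2 ⟨hstarsub hjS, hjShat⟩)

/-- If `Ŝ` consists of `k` largest predicted values, then for every `M ⊆ N` and
every `S* ⊆ N` with `|S*| ≤ k` and `S* \ M ≠ ∅`,
`v̂(Ŝ \ M) ≥ min{1, |Ŝ \ M| / |S* \ M|} · v̂(S* \ M)`. -/
theorem top_k_pred_sum_lower {α : Type*} [DecidableEq α] (N : Finset α) (k : ℕ) (hk : 0 < k)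
    (vhat : α → ℝ) (hvhat : ∀ i ∈ N, 0 ≤ vhat i)
    (Shat : Finset α) (hSsub : Shat ⊆ N) (hScard : Shat.card = k)
    (htop : ∀ i ∈ Shat, ∀ j ∈ N \ Shat, vhat j ≤ vhat i)
    (M : Finset α) (hM : M ⊆ N)
    (Sstar : Finset α) (hstarsub : Sstar ⊆ N) (hstarcard : Sstar.card ≤ k)
    (hne : (Sstar \ M).Nonempty) :
    min 1 (((Shat \ M).card : ℝ) / ((Sstar \ M).card : ℝ)) * ∑ i ∈ Sstar \ M, vhat i ≤
      ∑ i ∈ Shat \ M, vhat i :=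
  top_k_pred_sum_lower_general N vhat hvhat Shat hSsub htop M Sstar hstarsub
end

section
/- Let N be a finite set, k a positive integer, v, v̂ : N → ℝ_{≥0}, θ ∈ [0,1], and M ⊆ N with |M| ≤ √k · ln k, such that (1−θ)v(i) ≤ v̂(i) ≤ (1+θ)v(i) for all i ∈ N∖M. Let Ŝ ⊆ N with |Ŝ| = k consist of k largest predicted values, i.e., v̂(i) ≥ v̂(j) for every i ∈ Ŝ and j ∈ N∖Ŝ. Then for every S* ⊆ N with |S*| ≤ k, Σ_{i∈Ŝ∖M} v(i) ≥ (1 − 2θ − ln k/√k) · Σ_{i∈S*∖M} v(i). -/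
/-!
Write `A = Ŝ \ M` and `B = S* \ M`. Every element of `B \ A` lies outside `Ŝ`, so its predicted
value is at most the smallest predicted value on `A`; since `|B| ≤ k ≤ |A| + |M|`, an exchange
argument gives `|A| · v̂(B) ≤ (|A| + |M|) · v̂(A)`. The error bounds hold on `A` and `B`, turning
this into `|A| (1 - θ) v(B) ≤ (|A| + |M|) (1 + θ) v(A)`. Finally `|M| ≤ √k ln k` means
`|M| ≤ (ln k / √k)(|A| + |M|)`, so the factor `|A| / (|A| + |M|)` is at least `1 - ln k / √k`,
and `(1 - θ) / (1 + θ) ≥ 1 - 2θ`.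
-/

open Finset

section TopSelection

variable {α : Type*} [DecidableEq α] {A B : Finset α} {w : α → ℝ}

theorem sum_le_sum_add_card_sub_mul (c : ℝ) (hB : ∀ j ∈ B \ A, w j ≤ c)
    (hA : ∀ i ∈ A \ B, c ≤ w i) :
    ∑ j ∈ B, w j ≤ ∑ i ∈ A, w i + ((#B : ℝ) - #A) * c := by
  have hBA : ∑ j ∈ B \ A, w j ≤ #(B \ A) * c := by
    simpa using sum_le_card_nsmul _ _ _ hB
  have hAB : #(A \ B) * c ≤ ∑ i ∈ A \ B, w i := by
    simpa using card_nsmul_le_sum _ _ _ hA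
  have hcard : (#B : ℝ) - #A = #(B \ A) - #(A \ B) := by
    have h1 := card_sdiff_add_card_inter B A
    have h2 := card_sdiff_add_card_inter A B
    rw [inter_comm] at h2
    push_cast [← h1, ← h2]
    ring
  rw [← sum_inter_add_sum_sdiff B A, ← sum_inter_add_sum_sdiff A B, inter_comm A B, hcard]
  linarith

theorem card_mul_sum_le_mul_sum_of_forall_le (n : ℕ) (hw : ∀ i ∈ A, 0 ≤ w i)
    (htop : ∀ i ∈ A, ∀ j ∈ B \ A, w j ≤ w i) (hA : #A ≤ n) (hB : #B ≤ n) :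
    #A * ∑ j ∈ B, w j ≤ n * ∑ i ∈ A, w i := by
  rcases A.eq_empty_or_nonempty with rfl | hne
  · simp
  obtain ⟨i₀, hi₀, hmin⟩ := A.exists_min_image w hne
  have hexch := sum_le_sum_add_card_sub_mul (w i₀) (htop i₀ hi₀) fun i hi ↦
    hmin i (mem_sdiff.1 hi).1
  have hlow : #A * w i₀ ≤ ∑ i ∈ A, w i := by simpa using card_nsmul_le_sum _ _ _ hmin
  have hA' : (#A : ℝ) ≤ n := by exact_mod_cast hA
  have hB' : (#B : ℝ) ≤ n := by exact_mod_cast hB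
  have hw₀ : 0 ≤ #A * w i₀ := mul_nonneg (Nat.cast_nonneg _) (hw i₀ hi₀)
  calc #A * ∑ j ∈ B, w j ≤ #A * (∑ i ∈ A, w i + ((#B : ℝ) - #A) * w i₀) := by gcongr
    _ = #A * ∑ i ∈ A, w i + ((#B : ℝ) - #A) * (#A * w i₀) := by ring
    _ ≤ #A * ∑ i ∈ A, w i + (n - #A) * (#A * w i₀) := by gcongr
    _ ≤ #A * ∑ i ∈ A, w i + (n - #A) * ∑ i ∈ A, w i := by gcongr
    _ = n * ∑ i ∈ A, w i := by ring

end TopSelection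

theorem one_sub_two_mul_sub_mul_le_of_mul_le_mul {θ L a m x y : ℝ} (hθ : 0 ≤ θ) (hL : 0 ≤ L)
    (hm : m ≤ L * (a + m)) (ham : 0 < a + m) (hx : 0 ≤ x) (hy : 0 ≤ y)
    (h : a * ((1 - θ) * x) ≤ (a + m) * ((1 + θ) * y)) :
    (1 - 2 * θ - L) * x ≤ y := by
  rcases le_or_gt (1 - 2 * θ - L) 0 with hc | hc
  · nlinarith
  have ha : 0 < a := by nlinarith
  have hcoef : (1 - 2 * θ - L) * (1 + θ) ≤ (1 - θ) * (1 - L) := by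
    nlinarith [mul_nonneg hθ hL]
  have hfac : (1 - 2 * θ - L) * ((1 + θ) * (a + m)) ≤ (1 - θ) * a :=
    calc (1 - 2 * θ - L) * ((1 + θ) * (a + m))
        = (1 - 2 * θ - L) * (1 + θ) * (a + m) := by ring
      _ ≤ (1 - θ) * (1 - L) * (a + m) := by gcongr
      _ = (1 - θ) * ((1 - L) * (a + m)) := by ring
      _ ≤ (1 - θ) * a := mul_le_mul_of_nonneg_left (by linarith) (by linarith)
  have hpos : 0 < (1 - θ) * a := by nlinarith
  refine le_of_mul_le_mul_left ?_ hpos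
  nlinarith

theorem top_k_pred_actual_lower_general {α : Type*} [DecidableEq α] (N : Finset α) (k : ℕ) (hk : 0 < k)
    (v vhat : α → ℝ) (hv : ∀ i ∈ N, 0 ≤ v i) (hvhat : ∀ i ∈ N, 0 ≤ vhat i)
    (θ : ℝ) (hθ0 : 0 ≤ θ)
    (M : Finset α) (hMcard : (M.card : ℝ) ≤ Real.sqrt k * Real.log k)
    (herr : ∀ i ∈ N \ M, (1 - θ) * v i ≤ vhat i ∧ vhat i ≤ (1 + θ) * v i)
    (Shat : Finset α) (hSsub : Shat ⊆ N) (hScard : Shat.card = k)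
    (htop : ∀ i ∈ Shat, ∀ j ∈ N \ Shat, vhat j ≤ vhat i)
    (Sstar : Finset α) (hstarsub : Sstar ⊆ N) (hstarcard : Sstar.card ≤ k) :
    (1 - 2 * θ - Real.log k / Real.sqrt k) * ∑ i ∈ Sstar \ M, v i ≤
      ∑ i ∈ Shat \ M, v i := by
  have hA : Shat \ M ⊆ N \ M := sdiff_subset_sdiff hSsub le_rfl
  have hB : Sstar \ M ⊆ N \ M := sdiff_subset_sdiff hstarsub le_rfl
  have hk_le : k ≤ #(Shat \ M) + #M := hScard ▸ card_le_card_sdiff_add_card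
  have hexch : #(Shat \ M) * ∑ j ∈ Sstar \ M, vhat j ≤
      (#(Shat \ M) + #M : ℕ) * ∑ i ∈ Shat \ M, vhat i := by
    refine card_mul_sum_le_mul_sum_of_forall_le _ (fun i hi ↦ hvhat i (sdiff_subset (hA hi)))
      (fun i hi j hj ↦ htop i (sdiff_subset hi) j ?_) le_self_add ?_
    · simp only [mem_sdiff] at hj ⊢
      exact ⟨hstarsub hj.1.1, fun h ↦ hj.2 ⟨h, hj.1.2⟩⟩
    · exact (card_le_card sdiff_subset).trans (hstarcard.trans hk_le)
  have hlow : (1 - θ) * ∑ j ∈ Sstar \ M, v j ≤ ∑ j ∈ Sstar \ M, vhat j := by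
    rw [mul_sum]; exact sum_le_sum fun j hj ↦ (herr j (hB hj)).1
  have hupp : ∑ i ∈ Shat \ M, vhat i ≤ (1 + θ) * ∑ i ∈ Shat \ M, v i := by
    rw [mul_sum]; exact sum_le_sum fun i hi ↦ (herr i (hA hi)).2
  have hk' : (0 : ℝ) < k := by exact_mod_cast hk
  have hk_le' : (k : ℝ) ≤ #(Shat \ M) + #M := by exact_mod_cast hk_le
  have hL : 0 ≤ Real.log k / Real.sqrt k :=
    div_nonneg (Real.log_natCast_nonneg k) (Real.sqrt_nonneg _)
  have hM : (#M : ℝ) ≤ Real.log k / Real.sqrt k * (#(Shat \ M) + #M) :=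
    calc (#M : ℝ) ≤ Real.log k / Real.sqrt k * k := by
          rwa [div_mul_eq_mul_div, mul_div_assoc, Real.div_sqrt, mul_comm]
      _ ≤ _ := mul_le_mul_of_nonneg_left hk_le' hL
  refine one_sub_two_mul_sub_mul_le_of_mul_le_mul hθ0 hL hM (by linarith)
    (sum_nonneg fun j hj ↦ hv j (sdiff_subset (hB hj)))
    (sum_nonneg fun i hi ↦ hv i (sdiff_subset (hA hi))) ?_
  push_cast at hexch
  calc _ ≤ (#(Shat \ M) : ℝ) * ∑ j ∈ Sstar \ M, vhat j := by gcongr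
    _ ≤ _ := hexch
    _ ≤ _ := by gcongr

/-- If `|M| ≤ √k ln k` and all predictions outside `M` have multiplicative error
at most `θ ∈ [0,1]`, and `Ŝ` consists of `k` largest predicted values, then
`v(Ŝ \ M) ≥ (1 - 2θ - ln k/√k) · v(S* \ M)` for every `S* ⊆ N` with `|S*| ≤ k`. -/
theorem top_k_pred_actual_lower {α : Type*} [DecidableEq α] (N : Finset α) (k : ℕ) (hk : 0 < k)
    (v vhat : α → ℝ) (hv : ∀ i ∈ N, 0 ≤ v i) (hvhat : ∀ i ∈ N, 0 ≤ vhat i)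
    (θ : ℝ) (hθ0 : 0 ≤ θ) (hθ1 : θ ≤ 1)
    (M : Finset α) (hMsub : M ⊆ N) (hMcard : (M.card : ℝ) ≤ Real.sqrt k * Real.log k)
    (herr : ∀ i ∈ N \ M, (1 - θ) * v i ≤ vhat i ∧ vhat i ≤ (1 + θ) * v i)
    (Shat : Finset α) (hSsub : Shat ⊆ N) (hScard : Shat.card = k)
    (htop : ∀ i ∈ Shat, ∀ j ∈ N \ Shat, vhat j ≤ vhat i)
    (Sstar : Finset α) (hstarsub : Sstar ⊆ N) (hstarcard : Sstar.card ≤ k) :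
    (1 - 2 * θ - Real.log k / Real.sqrt k) * ∑ i ∈ Sstar \ M, v i ≤
      ∑ i ∈ Shat \ M, v i :=
  top_k_pred_actual_lower_general N k hk v vhat hv hvhat θ hθ0 M hMcard herr Shat hSsub hScard htop
    Sstar hstarsub hstarcard
end

section
/- Let N be a finite set, k a positive integer, v : N → ℝ_{>0}, v̂ : N → ℝ_{≥0}, and ε ∈ [0,1]. Let Ŝ ⊆ N with |Ŝ| = k consist of k largest predicted values, i.e., v̂(i) ≥ v̂(j) for every i ∈ Ŝ and j ∈ N∖Ŝ, and let î_min ∈ argmin_{i∈Ŝ} v̂(i). Assume |v̂(i)/v(i) − 1| ≤ ε for every i ∈ Ŝ and v̂(î_min) ≥ (1−ε)v(i) for every i ∈ N∖Ŝ. Then for every S* ⊆ N with |S*| ≤ k, Σ_{i∈Ŝ} v(i) ≥ ((1−ε)/(1+ε)) Σ_{i∈S*} v(i) ≥ (1−2ε) Σ_{i∈S*} v(i). -/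
/-!
Split `S*` and `Ŝ` along their intersection. On `S* ∩ Ŝ` the error bound gives
`(1 - ε) v ≤ v̂ ≤ (1 + ε) v` pointwise. The leftover set `S* \ Ŝ` is no larger than `Ŝ \ S*`,
and the value `v̂(î_min)` separates them: it dominates `(1 - ε) v` on the former and is dominated
by `v̂ ≤ (1 + ε) v` on the latter. Hence `(1 - ε) v(S*) ≤ (1 + ε) v(Ŝ)`.
-/

open Finset

theorem abs_div_sub_one_le_iff {v w ε : ℝ} (hv : 0 < v) :
    |w / v - 1| ≤ ε ↔ (1 - ε) * v ≤ w ∧ w ≤ (1 + ε) * v := by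
  rw [abs_le, div_sub_one hv.ne', le_div_iff₀ hv, div_le_iff₀ hv]
  constructor <;> rintro ⟨h₁, h₂⟩ <;> constructor <;> linarith

theorem Finset.sum_le_sum_of_card_le_of_separated {ι M : Type*} [DecidableEq ι]
    [AddCommMonoid M] [PartialOrder M] [IsOrderedAddMonoid M]
    {s t : Finset ι} {f g : ι → M} {m : M} (hcard : #s ≤ #t) (hm : 0 ≤ m)
    (hf : ∀ i ∈ s \ t, f i ≤ m) (hg : ∀ i ∈ t \ s, m ≤ g i) (hfg : ∀ i ∈ s ∩ t, f i ≤ g i) :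
    ∑ i ∈ s, f i ≤ ∑ i ∈ t, g i := by
  rw [← sum_inter_add_sum_sdiff s t, ← sum_inter_add_sum_sdiff t s, inter_comm t s]
  refine add_le_add (sum_le_sum hfg) ?_
  calc ∑ i ∈ s \ t, f i ≤ #(s \ t) • m := sum_le_card_nsmul _ _ _ hf
    _ ≤ #(t \ s) • m := nsmul_le_nsmul_left hm (card_sdiff_le_card_sdiff_iff.mpr hcard)
    _ ≤ ∑ i ∈ t \ s, g i := card_nsmul_le_sum _ _ _ hg

theorem one_sub_two_mul_le_one_sub_div_one_add {ε : ℝ} (hε : 0 ≤ ε) :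
    1 - 2 * ε ≤ (1 - ε) / (1 + ε) := by
  rw [le_div_iff₀ (by linarith)]
  nlinarith

theorem top_k_predictions_competitive_alt_error_general {α : Type*} [DecidableEq α]
    (N : Finset α) (k : ℕ)
    (v vhat : α → ℝ) (hv : ∀ i ∈ N, 0 < v i) (hvhat : ∀ i ∈ N, 0 ≤ vhat i)
    (ε : ℝ) (hε0 : 0 ≤ ε)
    (Shat : Finset α) (hSsub : Shat ⊆ N) (hScard : Shat.card = k)
    (imin : α) (himin : imin ∈ Shat) (hminval : ∀ i ∈ Shat, vhat imin ≤ vhat i)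
    (herrS : ∀ i ∈ Shat, |vhat i / v i - 1| ≤ ε)
    (herrout : ∀ i ∈ N \ Shat, (1 - ε) * v i ≤ vhat imin)
    (Sstar : Finset α) (hstarsub : Sstar ⊆ N) (hstarcard : Sstar.card ≤ k) :
    ((1 - ε) / (1 + ε)) * ∑ i ∈ Sstar, v i ≤ ∑ i ∈ Shat, v i ∧
      (1 - 2 * ε) * ∑ i ∈ Sstar, v i ≤ ((1 - ε) / (1 + ε)) * ∑ i ∈ Sstar, v i := by
  have hbounds (i) (hi : i ∈ Shat) : (1 - ε) * v i ≤ vhat i ∧ vhat i ≤ (1 + ε) * v i :=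
    (abs_div_sub_one_le_iff (hv i (hSsub hi))).mp (herrS i hi)
  have hkey : ∑ i ∈ Sstar, (1 - ε) * v i ≤ ∑ i ∈ Shat, (1 + ε) * v i :=
    sum_le_sum_of_card_le_of_separated (hScard ▸ hstarcard) (hvhat imin (hSsub himin))
      (fun i hi ↦ herrout i (sdiff_subset_sdiff hstarsub le_rfl hi))
      (fun i hi ↦ (hminval i (mem_sdiff.1 hi).1).trans (hbounds i (mem_sdiff.1 hi).1).2)
      (fun i hi ↦ (hbounds i (mem_inter.1 hi).2).1.trans (hbounds i (mem_inter.1 hi).2).2)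
  rw [← mul_sum, ← mul_sum] at hkey
  have hstar0 : 0 ≤ ∑ i ∈ Sstar, v i := sum_nonneg fun i hi ↦ (hv i (hstarsub hi)).le
  refine ⟨?_, mul_le_mul_of_nonneg_right (one_sub_two_mul_le_one_sub_div_one_add hε0) hstar0⟩
  rw [div_mul_eq_mul_div, div_le_iff₀ (by linarith)]
  linarith

/-- With the alternative error definition: if `|v̂(i)/v(i) - 1| ≤ ε` for all
`i ∈ Ŝ` and `v̂(î_min) ≥ (1-ε) v(i)` for all `i ∈ N \ Ŝ`, where `Ŝ` consists of `k` largest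
predicted values and `î_min` minimizes `v̂` over `Ŝ`, then
`v(Ŝ) ≥ ((1-ε)/(1+ε)) v(S*) ≥ (1-2ε) v(S*)` for every `S* ⊆ N` with `|S*| ≤ k`. -/
theorem top_k_predictions_competitive_alt_error {α : Type*} [DecidableEq α]
    (N : Finset α) (k : ℕ) (hk : 0 < k)
    (v vhat : α → ℝ) (hv : ∀ i ∈ N, 0 < v i) (hvhat : ∀ i ∈ N, 0 ≤ vhat i)
    (ε : ℝ) (hε0 : 0 ≤ ε) (hε1 : ε ≤ 1)
    (Shat : Finset α) (hSsub : Shat ⊆ N) (hScard : Shat.card = k)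
    (htop : ∀ i ∈ Shat, ∀ j ∈ N \ Shat, vhat j ≤ vhat i)
    (imin : α) (himin : imin ∈ Shat) (hminval : ∀ i ∈ Shat, vhat imin ≤ vhat i)
    (herrS : ∀ i ∈ Shat, |vhat i / v i - 1| ≤ ε)
    (herrout : ∀ i ∈ N \ Shat, (1 - ε) * v i ≤ vhat imin)
    (Sstar : Finset α) (hstarsub : Sstar ⊆ N) (hstarcard : Sstar.card ≤ k) :
    ((1 - ε) / (1 + ε)) * ∑ i ∈ Sstar, v i ≤ ∑ i ∈ Shat, v i ∧
      (1 - 2 * ε) * ∑ i ∈ Sstar, v i ≤ ((1 - ε) / (1 + ε)) * ∑ i ∈ Sstar, v i :=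
  top_k_predictions_competitive_alt_error_general N k v vhat hv hvhat ε hε0 Shat hSsub hScard imin
    himin hminval herrS herrout Sstar hstarsub hstarcard
end

section
/- Let N be a finite set, k a positive integer, v : N → ℝ_{>0}, v̂ : N → ℝ_{≥0}, θ ∈ [0,1], and M ⊆ N with |M| ≤ √k · ln k. Let Ŝ ⊆ N with |Ŝ| = k consist of k largest predicted values, i.e., v̂(i) ≥ v̂(j) for every i ∈ Ŝ and j ∈ N∖Ŝ, and let î_min ∈ argmin_{i∈Ŝ} v̂(i). Assume (1−θ)v(i) ≤ v̂(i) ≤ (1+θ)v(i) for every i ∈ Ŝ∖M and v̂(î_min) ≥ (1−θ)v(i) for every i ∈ (N∖Ŝ)∖M. Then for every S* ⊆ N with |S*| ≤ k, Σ_{i∈Ŝ∖M} v(i) ≥ (1 − 2θ − ln k/√k) · Σ_{i∈S*∖M} v(i). -/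
/-!
Let `w = v̂(î_min)`. Every kept candidate `i ∈ Ŝ \ M` has `w ≤ (1 + θ) v(i)`, and every missed
candidate `i ∈ (S* \ M) \ Ŝ` has `(1 - θ) v(i) ≤ w`. Since `|S*| ≤ |Ŝ|`, the missed candidates
can be matched injectively to kept candidates outside `S*`, except for at most `|M|` of them,
which gives `(1 - θ) v(S* \ M) ≤ (1 + θ) v(Ŝ \ M) + |M| w`. Summing the first bound over the at
least `k - |M|` kept candidates bounds `|M| w` by `(1 + θ) v(Ŝ \ M) |M| / (k - |M|)`, and
`|M| ≤ k ln k / √k` turns this into the stated factor.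
-/

open Finset

namespace Finset

variable {α : Type*} [DecidableEq α]

theorem card_sdiff_sdiff_le_card_sdiff_sdiff_add_card {s t u : Finset α} (h : #s ≤ #t) :
    #((s \ u) \ t) ≤ #((t \ u) \ s) + #u :=
  calc #((s \ u) \ t) ≤ #(s \ t) := card_le_card (sdiff_subset_sdiff sdiff_subset le_rfl)
    _ ≤ #(t \ s) := card_sdiff_le_card_sdiff_iff.2 h
    _ ≤ #((t \ s) \ u) + #u := card_le_card_sdiff_add_card
    _ = #((t \ u) \ s) + #u := by rw [sdiff_right_comm]

theorem one_sub_mul_sum_sdiff_le {s t u : Finset α} {v : α → ℝ} {θ w : ℝ} (hθ : 0 ≤ θ)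
    (hw : 0 ≤ w) (hcard : #s ≤ #t) (hv : ∀ i ∈ t, 0 ≤ v i)
    (hin : ∀ i ∈ t \ u, w ≤ (1 + θ) * v i) (hout : ∀ i ∈ (s \ u) \ t, (1 - θ) * v i ≤ w) :
    (1 - θ) * ∑ i ∈ s \ u, v i ≤ (1 + θ) * ∑ i ∈ t \ u, v i + #u * w := by
  have hinter : (s \ u) ∩ t = (t \ u) ∩ s := by ext; simp only [mem_inter, mem_sdiff]; tauto
  have hcommon : 0 ≤ ∑ i ∈ (t \ u) ∩ s, v i :=
    sum_nonneg fun i hi => hv i (mem_sdiff.1 (mem_inter.1 hi).1).1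
  have hmissed : (1 - θ) * ∑ i ∈ (s \ u) \ t, v i ≤ #((s \ u) \ t) * w := by
    simpa [mul_sum] using sum_le_card_nsmul _ _ _ hout
  have hextra : #((t \ u) \ s) * w ≤ (1 + θ) * ∑ i ∈ (t \ u) \ s, v i := by
    simpa [mul_sum] using card_nsmul_le_sum _ _ _ fun i hi => hin i (mem_sdiff.1 hi).1
  have hmatch : (#((s \ u) \ t) : ℝ) ≤ #((t \ u) \ s) + #u := by
    exact_mod_cast card_sdiff_sdiff_le_card_sdiff_sdiff_add_card hcard
  rw [← sum_inter_add_sum_sdiff (s \ u) t, ← sum_inter_add_sum_sdiff (t \ u) s, hinter]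
  nlinarith [mul_le_mul_of_nonneg_right hmatch hw]

end Finset

theorem mul_le_of_exchange_of_threshold {θ L k m P T w : ℝ} (hθ0 : 0 ≤ θ) (hθ1 : θ ≤ 1)
    (hL : 0 ≤ L) (hk : 0 < k) (hm0 : 0 ≤ m) (hm : m ≤ k * L) (hP : 0 ≤ P) (hT : 0 ≤ T)
    (hexch : (1 - θ) * P ≤ (1 + θ) * T + m * w) (hthr : (k - m) * w ≤ (1 + θ) * T) :
    (1 - 2 * θ - L) * P ≤ T := by
  rcases le_or_gt k m with hkm | hkm
  · have hL1 : 1 ≤ L := le_of_mul_le_mul_left (by linarith) hk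
    nlinarith
  have hscaled : (1 - θ) * (k - m) * P ≤ (1 + θ) * k * T := by
    nlinarith [mul_le_mul_of_nonneg_left hexch (sub_nonneg.2 hkm.le),
      mul_le_mul_of_nonneg_left hthr hm0]
  have hratio : (1 - θ) * (1 - L) * P ≤ (1 + θ) * T := by
    refine le_of_mul_le_mul_left ?_ hk
    nlinarith [mul_le_mul_of_nonneg_left hm (mul_nonneg (sub_nonneg.2 hθ1) hP)]
  have hfactor : (1 - 2 * θ - L) * (1 + θ) ≤ (1 - θ) * (1 - L) := by nlinarith
  refine le_of_mul_le_mul_left ?_ (by linarith : 0 < 1 + θ)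
  nlinarith [mul_le_mul_of_nonneg_right hfactor hP]

theorem top_k_pred_actual_lower_alt_error_general {α : Type*} [DecidableEq α]
    (N : Finset α) (k : ℕ) (hk : 0 < k)
    (v vhat : α → ℝ) (hv : ∀ i ∈ N, 0 < v i) (hvhat : ∀ i ∈ N, 0 ≤ vhat i)
    (θ : ℝ) (hθ0 : 0 ≤ θ) (hθ1 : θ ≤ 1)
    (M : Finset α) (hMcard : (M.card : ℝ) ≤ Real.sqrt k * Real.log k)
    (Shat : Finset α) (hSsub : Shat ⊆ N) (hScard : Shat.card = k)
    (imin : α) (himin : imin ∈ Shat) (hminval : ∀ i ∈ Shat, vhat imin ≤ vhat i)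
    (herrS : ∀ i ∈ Shat \ M, (1 - θ) * v i ≤ vhat i ∧ vhat i ≤ (1 + θ) * v i)
    (herrout : ∀ i ∈ (N \ Shat) \ M, (1 - θ) * v i ≤ vhat imin)
    (Sstar : Finset α) (hstarsub : Sstar ⊆ N) (hstarcard : Sstar.card ≤ k) :
    (1 - 2 * θ - Real.log k / Real.sqrt k) * ∑ i ∈ Sstar \ M, v i ≤
      ∑ i ∈ Shat \ M, v i := by
  have hw : 0 ≤ vhat imin := hvhat imin (hSsub himin)
  have hin : ∀ i ∈ Shat \ M, vhat imin ≤ (1 + θ) * v i := fun i hi =>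
    (hminval i (mem_sdiff.1 hi).1).trans (herrS i hi).2
  have hout : ∀ i ∈ (Sstar \ M) \ Shat, (1 - θ) * v i ≤ vhat imin := fun i hi => by
    simp only [mem_sdiff] at hi
    exact herrout i (by simp [hstarsub hi.1.1, hi.1.2, hi.2])
  have hexch := one_sub_mul_sum_sdiff_le hθ0 hw (hScard ▸ hstarcard)
    (fun i hi => (hv i (hSsub hi)).le) hin hout
  have hthr : ((k : ℝ) - #M) * vhat imin ≤ (1 + θ) * ∑ i ∈ Shat \ M, v i := by
    have hkept : (k : ℝ) - #M ≤ #(Shat \ M) := by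
      rw [sub_le_iff_le_add, ← hScard]
      exact_mod_cast card_le_card_sdiff_add_card
    calc ((k : ℝ) - #M) * vhat imin ≤ #(Shat \ M) * vhat imin :=
          mul_le_mul_of_nonneg_right hkept hw
      _ ≤ (1 + θ) * ∑ i ∈ Shat \ M, v i := by
          simpa [mul_sum] using card_nsmul_le_sum _ _ _ hin
  refine mul_le_of_exchange_of_threshold hθ0 hθ1 (by positivity) (by exact_mod_cast hk)
    (Nat.cast_nonneg _) ?_ (sum_nonneg fun i hi => (hv i (hstarsub (mem_sdiff.1 hi).1)).le)
    (sum_nonneg fun i hi => (hv i (hSsub (mem_sdiff.1 hi).1)).le) hexch hthr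
  rwa [mul_div_left_comm, Real.div_sqrt, mul_comm]

/-- With the alternative error definition: if `|M| ≤ √k ln k`,
`(1-θ)v(i) ≤ v̂(i) ≤ (1+θ)v(i)` for all `i ∈ Ŝ \ M`, and `v̂(î_min) ≥ (1-θ)v(i)` for all
`i ∈ (N \ Ŝ) \ M`, where `Ŝ` consists of `k` largest predicted values and `î_min` minimizes
`v̂` over `Ŝ`, then `v(Ŝ \ M) ≥ (1 - 2θ - ln k/√k) · v(S* \ M)` for every `S* ⊆ N` with
`|S*| ≤ k`. -/
theorem top_k_pred_actual_lower_alt_error {α : Type*} [DecidableEq α]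
    (N : Finset α) (k : ℕ) (hk : 0 < k)
    (v vhat : α → ℝ) (hv : ∀ i ∈ N, 0 < v i) (hvhat : ∀ i ∈ N, 0 ≤ vhat i)
    (θ : ℝ) (hθ0 : 0 ≤ θ) (hθ1 : θ ≤ 1)
    (M : Finset α) (hMsub : M ⊆ N) (hMcard : (M.card : ℝ) ≤ Real.sqrt k * Real.log k)
    (Shat : Finset α) (hSsub : Shat ⊆ N) (hScard : Shat.card = k)
    (htop : ∀ i ∈ Shat, ∀ j ∈ N \ Shat, vhat j ≤ vhat i)
    (imin : α) (himin : imin ∈ Shat) (hminval : ∀ i ∈ Shat, vhat imin ≤ vhat i)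
    (herrS : ∀ i ∈ Shat \ M, (1 - θ) * v i ≤ vhat i ∧ vhat i ≤ (1 + θ) * v i)
    (herrout : ∀ i ∈ (N \ Shat) \ M, (1 - θ) * v i ≤ vhat imin)
    (Sstar : Finset α) (hstarsub : Sstar ⊆ N) (hstarcard : Sstar.card ≤ k) :
    (1 - 2 * θ - Real.log k / Real.sqrt k) * ∑ i ∈ Sstar \ M, v i ≤
      ∑ i ∈ Shat \ M, v i :=
  top_k_pred_actual_lower_alt_error_general N k hk v vhat hv hvhat θ hθ0 hθ1 M hMcard Shat hSsub
    hScard imin himin hminval herrS herrout Sstar hstarsub hstarcard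
end

section
/- For every real τ ∈ (0,1] and every integer m ≥ 2, ∫_τ^1 (1−t)(1 − (1−t)^{m−1}) (τ/t) dt + (1−τ) · ∫_0^τ (m−1)(1−s)^{m−2} (τ−s) ds = − τ · Σ_{k=1}^{m} C(m,k) (−1)^{k} (1 − τ^k)/k − ((1−τ)/m)(1 − (1−τ)^{m}), where C(m,k) denotes the binomial coefficient. -/
/-!
On `[τ, 1]` the first integrand is `τ * ((1 - (1 - t) ^ m) / t - 1)`, and expanding `(1 - t) ^ m`
binomially makes `(1 - (1 - t) ^ m) / t` a polynomial in `t`, integrated term by term. The second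
integrand splits along `τ - s = (1 - s) - (1 - τ)` into two powers of `1 - s`.
-/

open Finset intervalIntegral

theorem one_sub_pow_sub_one {R : Type*} [CommRing R] (m : ℕ) (t : R) :
    (1 - t) ^ m - 1 = ∑ k ∈ Icc 1 m, (m.choose k : R) * (-1) ^ k * t ^ k := by
  rw [sub_eq_neg_add 1 t, add_pow, range_eq_Ico, sum_eq_sum_Ico_succ_bot (Nat.succ_pos m),
    zero_add, Nat.succ_eq_add_one, Ico_add_one_right_eq_Icc]
  simp only [pow_zero, one_pow, mul_one, Nat.choose_zero_right, Nat.cast_one, add_sub_cancel_left]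
  exact sum_congr rfl fun k _ => by rw [neg_pow]; ring

theorem integral_one_sub_pow (a b : ℝ) (n : ℕ) :
    ∫ s in a..b, (1 - s) ^ n = ((1 - a) ^ (n + 1) - (1 - b) ^ (n + 1)) / (n + 1) := by
  rw [integral_comp_sub_left (fun x => x ^ n), integral_pow]

theorem integral_pow_pred {a b : ℝ} {k : ℕ} (hk : k ≠ 0) :
    ∫ t in a..b, t ^ (k - 1) = (b ^ k - a ^ k) / k := by
  obtain ⟨j, rfl⟩ := Nat.exists_eq_succ_of_ne_zero hk
  simp [integral_pow]

theorem one_sub_one_sub_pow_div_eq_sum {K : Type*} [Field K] {t : K} (ht : t ≠ 0) (m : ℕ) :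
    (1 - (1 - t) ^ m) / t = -∑ k ∈ Icc 1 m, (m.choose k : K) * (-1) ^ k * t ^ (k - 1) := by
  rw [div_eq_iff ht, neg_mul, sum_mul, ← neg_sub, one_sub_pow_sub_one]
  congr 1
  refine sum_congr rfl fun k hk => ?_
  rw [mul_assoc _ (t ^ (k - 1)), pow_sub_one_mul (by have := (mem_Icc.mp hk).1; omega)]

theorem integral_one_sub_one_sub_pow_div {a b : ℝ} (h : (0 : ℝ) ∉ Set.uIcc a b) (m : ℕ) :
    ∫ t in a..b, (1 - (1 - t) ^ m) / t =
      -∑ k ∈ Icc 1 m, (m.choose k : ℝ) * (-1) ^ k * (b ^ k - a ^ k) / k := by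
  have hpoly : Set.EqOn (fun t => (1 - (1 - t) ^ m) / t)
      (fun t => -∑ k ∈ Icc 1 m, (m.choose k : ℝ) * (-1) ^ k * t ^ (k - 1)) (Set.uIcc a b) :=
    fun t ht => one_sub_one_sub_pow_div_eq_sum (ne_of_mem_of_not_mem ht h) m
  rw [integral_congr hpoly, intervalIntegral.integral_neg,
    integral_finsetSum fun k _ => by apply Continuous.intervalIntegrable; fun_prop]
  congr 1
  refine sum_congr rfl fun k hk => ?_
  rw [integral_const_mul, integral_pow_pred (by have := (mem_Icc.mp hk).1; omega)]
  ring

theorem integral_one_sub_pow_mul_sub (a b : ℝ) (n : ℕ) :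
    ∫ s in a..b, ((n : ℝ) + 1) * (1 - s) ^ n * (b - s) =
      (1 - a) ^ (n + 1) * (b - a) - ((1 - a) ^ (n + 2) - (1 - b) ^ (n + 2)) / (n + 2) := by
  have hsplit : (fun s : ℝ => ((n : ℝ) + 1) * (1 - s) ^ n * (b - s)) =
      fun s => ((n : ℝ) + 1) * (1 - s) ^ (n + 1) - ((n + 1) * (1 - b)) * (1 - s) ^ n := by
    funext s; ring
  rw [hsplit, integral_sub (by apply Continuous.intervalIntegrable; fun_prop)
      (by apply Continuous.intervalIntegrable; fun_prop),
    integral_const_mul, integral_const_mul, integral_one_sub_pow, integral_one_sub_pow]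
  push_cast
  field_simp
  ring

/-- For `τ ∈ (0,1]` and `m ≥ 2`,
`∫_τ^1 (1-t)(1-(1-t)^{m-1})(τ/t) dt + (1-τ) ∫_0^τ (m-1)(1-s)^{m-2}(τ-s) ds
  = -τ Σ_{k=1}^m C(m,k) (-1)^k (1-τ^k)/k - ((1-τ)/m)(1-(1-τ)^m)`. -/
theorem integral_secretary_identity_case_v (τ : ℝ) (hτ0 : 0 < τ) (hτ1 : τ ≤ 1)
    (m : ℕ) (hm : 2 ≤ m) :
    (∫ t in τ..1, (1 - t) * (1 - (1 - t) ^ (m - 1)) * (τ / t)) +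
      (1 - τ) * ∫ s in (0 : ℝ)..τ, ((m : ℝ) - 1) * (1 - s) ^ (m - 2) * (τ - s) =
    -(τ * ∑ k ∈ Finset.Icc 1 m, (m.choose k : ℝ) * (-1 : ℝ) ^ k * (1 - τ ^ k) / (k : ℝ)) -
      ((1 - τ) / (m : ℝ)) * (1 - (1 - τ) ^ m) := by
  obtain ⟨n, rfl⟩ : ∃ n, m = n + 2 := ⟨m - 2, by omega⟩
  have hzero : (0 : ℝ) ∉ Set.uIcc τ 1 := by
    rw [Set.uIcc_of_le hτ1, Set.mem_Icc]
    exact fun h => hτ0.not_ge h.1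
  have hfirst : Set.EqOn (fun t => (1 - t) * (1 - (1 - t) ^ (n + 2 - 1)) * (τ / t))
      (fun t => τ * ((1 - (1 - t) ^ (n + 2)) / t - 1)) (Set.uIcc τ 1) := by
    intro t ht
    have ht0 : t ≠ 0 := ne_of_mem_of_not_mem ht hzero
    show (1 - t) * (1 - (1 - t) ^ (n + 1)) * (τ / t) = _
    field_simp
    ring
  have hsecond : (fun s : ℝ => (((n + 2 : ℕ) : ℝ) - 1) * (1 - s) ^ (n + 2 - 2) * (τ - s)) =
      fun s => ((n : ℝ) + 1) * (1 - s) ^ n * (τ - s) := by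
    funext s; push_cast; ring_nf
  have hint :
      IntervalIntegrable (fun t : ℝ => (1 - (1 - t) ^ (n + 2)) / t) MeasureTheory.volume τ 1 :=
    ContinuousOn.intervalIntegrable <| ContinuousOn.div (by fun_prop) (by fun_prop)
      fun t ht => ne_of_mem_of_not_mem ht hzero
  rw [integral_congr hfirst, hsecond, integral_const_mul,
    integral_sub hint intervalIntegrable_const, integral_one_sub_one_sub_pow_div hzero,
    integral_one_sub_pow_mul_sub]
  simp only [one_pow, integral_const, smul_eq_mul, mul_one, sub_zero]
  push_cast
  field_simp
  ring
end

section
/- For every real τ ∈ (0,1), the function g(m) = τ ln(1/τ) − τ ∫_τ^1 ((1−t)^m / t) dt − (1−τ)/m is non-decreasing on the positive integers, i.e., g(m+1) ≥ g(m) for every positive integer m. -/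
open MeasureTheory

lemma intervalIntegrable_one_sub_pow_div {a b : ℝ} (ha : 0 < a) (hab : a ≤ b) (k : ℕ) :
    IntervalIntegrable (fun t => (1 - t) ^ k / t) volume a b := by
  refine ContinuousOn.intervalIntegrable (ContinuousOn.div (by fun_prop) continuousOn_id ?_)
  intro t ht
  rw [Set.uIcc_of_le hab] at ht
  exact (ha.trans_le ht.1).ne'

lemma integral_one_sub_pow_succ_div_le {a : ℝ} (ha : 0 < a) (ha1 : a ≤ 1) (m : ℕ) :
    ∫ t in a..1, (1 - t) ^ (m + 1) / t ≤ ∫ t in a..1, (1 - t) ^ m / t := by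
  refine intervalIntegral.integral_mono_on ha1 (intervalIntegrable_one_sub_pow_div ha ha1 _)
    (intervalIntegrable_one_sub_pow_div ha ha1 _) fun t ht => ?_
  have ht0 : 0 < t := ha.trans_le ht.1
  have hpow : (1 - t) ^ (m + 1) ≤ (1 - t) ^ m :=
    pow_le_pow_of_le_one (by linarith [ht.2]) (by linarith [ht.2]) m.le_succ
  gcongr

/-- For `τ ∈ (0,1)`, the function
`g(m) = τ ln(1/τ) - τ ∫_τ^1 (1-t)^m / t dt - (1-τ)/m` is non-decreasing in the positive
integer `m`. -/
theorem case_v_lower_bound_monotone (τ : ℝ) (hτ0 : 0 < τ) (hτ1 : τ < 1)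
    (m : ℕ) (hm : 0 < m) :
    τ * Real.log (1 / τ) - τ * (∫ t in τ..1, (1 - t) ^ m / t) - (1 - τ) / (m : ℝ) ≤
      τ * Real.log (1 / τ) - τ * (∫ t in τ..1, (1 - t) ^ (m + 1) / t) -
        (1 - τ) / ((m : ℝ) + 1) := by
  have hintegral := mul_le_mul_of_nonneg_left
    (integral_one_sub_pow_succ_div_le hτ0 hτ1.le m) hτ0.le
  have hreciprocal : (1 - τ) / ((m : ℝ) + 1) ≤ (1 - τ) / (m : ℝ) :=
    div_le_div_of_nonneg_left (by linarith) (by exact_mod_cast hm) (by linarith)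
  linarith
end
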